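/- (Lemma 2: uniform upper bound on the posterior Kalman covariances.) Assume additionally that the matrix A is invertible. Let P⁻_k be the Kalman predicted covariance sequence with positive semidefinite initial matrix P⁻_0 ⪯ P_∞, where P_∞ is a steady-state covariance, and define the posterior covariances P_k = P⁻_k − P⁻_k Cᵀ (C P⁻_k Cᵀ + R)⁻¹ C P⁻_k. Then for all k ≥ 0, P_k ⪯ A⁻¹ (P_∞ − Q) A⁻ᵀ. -/
import Mathlib


open Matrix

/-- The one-step Riccati map of the Kalman predicted covariances,
`f(S) = A (S − S Cᵀ (C S Cᵀ + R)⁻¹ C S) Aᵀ + Q`. -/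
noncomputable def riccatiMap {nx ny : ℕ}
    (A Q : Matrix (Fin nx) (Fin nx) ℝ)
    (C : Matrix (Fin ny) (Fin nx) ℝ) (R : Matrix (Fin ny) (Fin ny) ℝ)
    (S : Matrix (Fin nx) (Fin nx) ℝ) : Matrix (Fin nx) (Fin nx) ℝ :=
  A * (S - S * Cᵀ * (C * S * Cᵀ + R)⁻¹ * (C * S)) * Aᵀ + Q

set_option maxHeartbeats 1000000

section Aux

variable {nx ny : ℕ} {C : Matrix (Fin ny) (Fin nx) ℝ} {R : Matrix (Fin ny) (Fin ny) ℝ}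

lemma psd_transpose_eq {n : ℕ} {S : Matrix (Fin n) (Fin n) ℝ} (hS : S.PosSemidef) :
    Sᵀ = S := by
  rw [← conjTranspose_eq_transpose_of_trivial]; exact hS.isHermitian

lemma psd_conj {n m : ℕ} {S : Matrix (Fin n) (Fin n) ℝ} (hS : S.PosSemidef)
    (B : Matrix (Fin m) (Fin n) ℝ) : (B * S * Bᵀ).PosSemidef := by
  rw [← conjTranspose_eq_transpose_of_trivial]
  exact hS.mul_mul_conjTranspose_same B

lemma E_posDef (hR : R.PosDef) {S : Matrix (Fin nx) (Fin nx) ℝ} (hS : S.PosSemidef) :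
    (C * S * Cᵀ + R).PosDef :=
  Matrix.PosDef.posSemidef_add (psd_conj hS C) hR

/-- Key algebraic identity. -/
lemma key_identity (S : Matrix (Fin nx) (Fin nx) ℝ) (E : Matrix (Fin ny) (Fin ny) ℝ)
    (hS : Sᵀ = S) (hET : (E⁻¹)ᵀ = E⁻¹)
    (h1 : E * E⁻¹ = 1) (h2 : E⁻¹ * E = 1)
    (K : Matrix (Fin nx) (Fin ny) ℝ) :
    (1 - K * C) * S * (1 - K * C)ᵀ + K * (E - C * S * Cᵀ) * Kᵀ
      = (S - S * Cᵀ * E⁻¹ * (C * S))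
        + (K - S * Cᵀ * E⁻¹) * E * (K - S * Cᵀ * E⁻¹)ᵀ := by
  have c1 : ∀ X : Matrix (Fin ny) (Fin nx) ℝ, E * (E⁻¹ * X) = X := fun X => by
    rw [← Matrix.mul_assoc, h1, Matrix.one_mul]
  have c2 : ∀ X : Matrix (Fin ny) (Fin nx) ℝ, E⁻¹ * (E * X) = X := fun X => by
    rw [← Matrix.mul_assoc, h2, Matrix.one_mul]
  simp only [transpose_sub, transpose_mul, transpose_one, transpose_transpose, hS, hET]
  simp only [Matrix.sub_mul, Matrix.mul_sub, Matrix.add_mul, Matrix.mul_add, Matrix.one_mul, Matrix.mul_one, Matrix.mul_assoc]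
  simp only [c1, c2]
  abel

end Aux

section Aux2

variable {nx ny : ℕ} {C : Matrix (Fin ny) (Fin nx) ℝ} {R : Matrix (Fin ny) (Fin ny) ℝ}

lemma E_mul_inv (hR : R.PosDef) {S : Matrix (Fin nx) (Fin nx) ℝ} (hS : S.PosSemidef) :
    (C * S * Cᵀ + R) * (C * S * Cᵀ + R)⁻¹ = 1 :=
  Matrix.mul_nonsing_inv _ ((Matrix.isUnit_iff_isUnit_det _).1 (E_posDef hR hS).isUnit)

lemma E_inv_mul (hR : R.PosDef) {S : Matrix (Fin nx) (Fin nx) ℝ} (hS : S.PosSemidef) :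
    (C * S * Cᵀ + R)⁻¹ * (C * S * Cᵀ + R) = 1 :=
  Matrix.nonsing_inv_mul _ ((Matrix.isUnit_iff_isUnit_det _).1 (E_posDef hR hS).isUnit)

lemma E_inv_transpose (hR : R.PosDef) {S : Matrix (Fin nx) (Fin nx) ℝ} (hS : S.PosSemidef) :
    ((C * S * Cᵀ + R)⁻¹)ᵀ = (C * S * Cᵀ + R)⁻¹ := by
  rw [Matrix.transpose_nonsing_inv, psd_transpose_eq (E_posDef hR hS).posSemidef]

lemma post_eq (hR : R.PosDef) {S : Matrix (Fin nx) (Fin nx) ℝ} (hS : S.PosSemidef) :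
    S - S * Cᵀ * (C * S * Cᵀ + R)⁻¹ * (C * S)
      = (1 - S * Cᵀ * (C * S * Cᵀ + R)⁻¹ * C) * S * (1 - S * Cᵀ * (C * S * Cᵀ + R)⁻¹ * C)ᵀ
        + (S * Cᵀ * (C * S * Cᵀ + R)⁻¹) * R * (S * Cᵀ * (C * S * Cᵀ + R)⁻¹)ᵀ := by
  have h := key_identity (C := C) S (C * S * Cᵀ + R) (psd_transpose_eq hS)
    (E_inv_transpose hR hS) (E_mul_inv hR hS) (E_inv_mul hR hS)
    (S * Cᵀ * (C * S * Cᵀ + R)⁻¹)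
  rw [add_sub_cancel_left, sub_self, Matrix.zero_mul, Matrix.zero_mul, add_zero] at h
  exact h.symm

lemma post_psd (hR : R.PosDef) {S : Matrix (Fin nx) (Fin nx) ℝ} (hS : S.PosSemidef) :
    (S - S * Cᵀ * (C * S * Cᵀ + R)⁻¹ * (C * S)).PosSemidef := by
  rw [post_eq hR hS]
  exact (psd_conj hS _).add (psd_conj hR.posSemidef _)

lemma post_mono (hR : R.PosDef) {S1 S2 : Matrix (Fin nx) (Fin nx) ℝ}
    (h1 : S1.PosSemidef) (h2 : S2.PosSemidef) (hd : (S2 - S1).PosSemidef) :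
    ((S2 - S2 * Cᵀ * (C * S2 * Cᵀ + R)⁻¹ * (C * S2))
      - (S1 - S1 * Cᵀ * (C * S1 * Cᵀ + R)⁻¹ * (C * S1))).PosSemidef := by
  set K := S2 * Cᵀ * (C * S2 * Cᵀ + R)⁻¹ with hK
  have e1 := key_identity (C := C) S1 (C * S1 * Cᵀ + R) (psd_transpose_eq h1)
    (E_inv_transpose hR h1) (E_mul_inv hR h1) (E_inv_mul hR h1) K
  rw [add_sub_cancel_left] at e1
  have main : (S2 - S2 * Cᵀ * (C * S2 * Cᵀ + R)⁻¹ * (C * S2))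
      - (S1 - S1 * Cᵀ * (C * S1 * Cᵀ + R)⁻¹ * (C * S1))
      = (1 - K * C) * (S2 - S1) * (1 - K * C)ᵀ
        + (K - S1 * Cᵀ * (C * S1 * Cᵀ + R)⁻¹) * (C * S1 * Cᵀ + R)
            * (K - S1 * Cᵀ * (C * S1 * Cᵀ + R)⁻¹)ᵀ := by
    have e1' : S1 - S1 * Cᵀ * (C * S1 * Cᵀ + R)⁻¹ * (C * S1)
        = (1 - K * C) * S1 * (1 - K * C)ᵀ + K * R * Kᵀ
          - (K - S1 * Cᵀ * (C * S1 * Cᵀ + R)⁻¹) * (C * S1 * Cᵀ + R)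
              * (K - S1 * Cᵀ * (C * S1 * Cᵀ + R)⁻¹)ᵀ := by
      rw [e1]; abel
    have expand : (1 - K * C) * (S2 - S1) * (1 - K * C)ᵀ
        = (1 - K * C) * S2 * (1 - K * C)ᵀ - (1 - K * C) * S1 * (1 - K * C)ᵀ := by
      rw [Matrix.mul_sub, Matrix.sub_mul]
    rw [post_eq hR h2, ← hK, e1', expand]
    abel
  rw [main]
  exact (psd_conj hd _).add (psd_conj (E_posDef hR h1).posSemidef _)

end Aux2


/-- **Lemma 2.** Assume `A` is invertible. If the Kalman predicted
covariance sequence `P⁻` starts with `P⁻_0 ⪯ P_∞`, where `P_∞` is a steady-state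
covariance, then the posterior covariances
`P_k = P⁻_k − P⁻_k Cᵀ (C P⁻_k Cᵀ + R)⁻¹ C P⁻_k` satisfy
`P_k ⪯ A⁻¹ (P_∞ − Q) A⁻ᵀ` for all `k ≥ 0`. -/
theorem kalman_posterior_cov_uniformly_bounded {nx ny : ℕ}
    (A : Matrix (Fin nx) (Fin nx) ℝ) (C : Matrix (Fin ny) (Fin nx) ℝ)
    (Q : Matrix (Fin nx) (Fin nx) ℝ) (R : Matrix (Fin ny) (Fin ny) ℝ)
    (hQ : Q.PosSemidef) (hR : R.PosDef)
    (hA : IsUnit A)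
    (Pminus : ℕ → Matrix (Fin nx) (Fin nx) ℝ)
    (hP0 : (Pminus 0).PosSemidef)
    (hrec : ∀ k : ℕ, Pminus (k + 1) = riccatiMap A Q C R (Pminus k))
    (Pinf : Matrix (Fin nx) (Fin nx) ℝ)
    (hPinf : Pinf.PosSemidef)
    (hss : Pinf = riccatiMap A Q C R Pinf)
    (hinit : (Pinf - Pminus 0).PosSemidef)
    (Ppost : ℕ → Matrix (Fin nx) (Fin nx) ℝ)
    (hpost : ∀ k : ℕ, Ppost k =
      Pminus k - Pminus k * Cᵀ * (C * Pminus k * Cᵀ + R)⁻¹ * (C * Pminus k)) :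
    ∀ k : ℕ, (A⁻¹ * (Pinf - Q) * (A⁻¹)ᵀ - Ppost k).PosSemidef := by
  have hdet : IsUnit A.det := (Matrix.isUnit_iff_isUnit_det A).1 hA
  have hinv : A⁻¹ * A = 1 := Matrix.nonsing_inv_mul A hdet
  have hinvT : Aᵀ * (A⁻¹)ᵀ = 1 := by
    rw [← Matrix.transpose_mul, hinv, Matrix.transpose_one]
  have key : ∀ k, (Pminus k).PosSemidef ∧ (Pinf - Pminus k).PosSemidef := by
    intro k
    induction k with
    | zero => exact ⟨hP0, hinit⟩
    | succ k ih =>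
      obtain ⟨hpk, hdk⟩ := ih
      refine ⟨?_, ?_⟩
      · rw [hrec k]
        exact (psd_conj (post_psd hR hpk) A).add hQ
      · have hgd := post_mono (C := C) hR hpk hPinf hdk
        have heq : Pinf - Pminus (k + 1)
            = A * ((Pinf - Pinf * Cᵀ * (C * Pinf * Cᵀ + R)⁻¹ * (C * Pinf))
              - (Pminus k - Pminus k * Cᵀ * (C * Pminus k * Cᵀ + R)⁻¹ * (C * Pminus k))) * Aᵀ := by
          rw [hrec k]
          nth_rewrite 1 [hss]
          unfold riccatiMap
          simp only [Matrix.mul_sub, Matrix.sub_mul]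
          abel
        rw [heq]
        exact psd_conj hgd A
  intro k
  have hdk1 := (key (k + 1)).2
  have hpostk : Pminus (k + 1) = A * Ppost k * Aᵀ + Q := by
    rw [hrec k, hpost k]; rfl
  rw [hpostk] at hdk1
  have hconj := psd_conj hdk1 A⁻¹
  have hmid : A⁻¹ * (A * Ppost k * Aᵀ) * (A⁻¹)ᵀ = Ppost k := by
    rw [Matrix.mul_assoc A (Ppost k) Aᵀ, ← Matrix.mul_assoc A⁻¹ A (Ppost k * Aᵀ), hinv,
      Matrix.one_mul, Matrix.mul_assoc, hinvT, Matrix.mul_one]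
  have heq2 : A⁻¹ * (Pinf - (A * Ppost k * Aᵀ + Q)) * (A⁻¹)ᵀ
      = A⁻¹ * (Pinf - Q) * (A⁻¹)ᵀ - Ppost k := by
    simp only [Matrix.mul_sub, Matrix.sub_mul, Matrix.mul_add, Matrix.add_mul]
    rw [hmid]
    abel
  rw [heq2] at hconj
  exact hconj
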